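/- arXiv:1509.01877 — 2 statements merged into one kernel-verified Lean document; each statement's English description precedes it below -/
import Mathlib

section
/- Fix real design points x₁ < x₂ < ⋯ < x_n (n ≥ 2) and let C = {θ ∈ ℝⁿ : (θ₂−θ₁)/(x₂−x₁) ≤ (θ₃−θ₂)/(x₃−x₂) ≤ ⋯ ≤ (θ_n−θ_{n−1})/(x_n−x_{n−1})} be the univariate convex regression cone. Let θ̂(y) = P_C(y). For Lebesgue-almost every y ∈ ℝⁿ, the map θ̂ is differentiable at y with divergence D(y) = s + 2, where s = #{k ∈ {1,…,n−2} : (θ̂_{k+2}(y)−θ̂_{k+1}(y))/(x_{k+2}−x_{k+1}) > (θ̂_{k+1}(y)−θ̂_k(y))/(x_{k+1}−x_k)} is the number of strict changes of slope of the fit θ̂(y). -/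
/-!
The cone `C` is `{θ | ∀ k, 0 ≤ ⟪a k, θ⟫}` for the `n - 2` slope-change functionals `a k`, which
are linearly independent. Let `A` be the active set of `θ̂(y)`. The optimality conditions say
that `θ̂(y)` is the orthogonal projection of `y` onto `V_A = {a k | k ∈ A}ᗮ`, and that the
coordinates `λ_k` of the projection of `y` onto `span {a k | k ∈ A}` in the basis `(a k)_{k ∈ A}`
are `≤ 0`. Off the finitely many hyperplanes `{λ_k = 0}` (over all `A` and `k ∈ A`) these
inequalities are strict, as are the inactive constraints, so they persist near `y`, where the
projection then coincides with the linear map `P_{V_A}` of trace `n - |A|`. The strict slope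
changes of `θ̂(y)` are exactly the inactive constraints, so there are `n - 2 - |A|` of them.
-/

open Matrix MeasureTheory

/-- The divergence of a map `ℝⁿ → ℝⁿ` at `y`: the trace of its derivative,
`∑ i, ∂fᵢ/∂yᵢ (y)`. -/
noncomputable def divg {n : ℕ} (f : (Fin n → ℝ) → (Fin n → ℝ)) (y : Fin n → ℝ) : ℝ :=
  ∑ i, fderiv ℝ f y (Pi.single i 1) i

open Set Submodule Filter Topology Module WithLp
open scoped RealInnerProductSpace

theorem linearIndependent_of_triangular {ι R M : Type*} [LinearOrder ι] [CommRing R] [IsDomain R]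
    [AddCommGroup M] [Module R M] {v : ι → M} (f : ι → M →ₗ[R] R)
    (hlt : ∀ i j, i < j → f i (v j) = 0) (hdiag : ∀ i, f i (v i) ≠ 0) :
    LinearIndependent R v := by
  classical
  rw [linearIndependent_iff']
  intro s g hg i hi
  by_contra hne
  -- evaluate the relation with the functional of the least index carrying a nonzero coefficient
  set t := s.filter (g · ≠ 0)
  have ht : t.Nonempty := ⟨i, Finset.mem_filter.2 ⟨hi, hne⟩⟩
  obtain ⟨hms, hm0⟩ := Finset.mem_filter.1 (t.min'_mem ht)
  have := congrArg (f (t.min' ht)) hg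
  rw [map_sum, map_zero, Finset.sum_eq_single_of_mem _ hms] at this
  · rw [map_smul, smul_eq_mul] at this
    exact mul_ne_zero hm0 (hdiag _) this
  · intro j hj hjm
    by_cases hgj : g j = 0
    · rw [hgj, zero_smul, map_zero]
    · rw [map_smul, hlt _ _ ((t.min'_le j (Finset.mem_filter.2 ⟨hj, hgj⟩)).lt_of_ne (Ne.symm hjm)),
        smul_zero]

theorem Submodule.trace_starProjection {𝕜 E : Type*} [RCLike 𝕜] [NormedAddCommGroup E]
    [InnerProductSpace 𝕜 E] [FiniteDimensional 𝕜 E] (K : Submodule 𝕜 E) :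
    LinearMap.trace 𝕜 E K.starProjection = finrank 𝕜 K := by
  have h : LinearMap.IsProj K (K.starProjection : E →ₗ[𝕜] E) :=
    ⟨K.starProjection_apply_mem, fun _ hx => starProjection_eq_self_iff.2 hx⟩
  exact h.trace

theorem divg_eq_trace_of_hasFDerivAt {n : ℕ} {f : (Fin n → ℝ) → (Fin n → ℝ)} {y : Fin n → ℝ}
    {L : (Fin n → ℝ) →L[ℝ] (Fin n → ℝ)} (h : HasFDerivAt f L y) :
    divg f y = LinearMap.trace ℝ _ (L : (Fin n → ℝ) →ₗ[ℝ] (Fin n → ℝ)) := by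
  rw [divg, h.fderiv, LinearMap.trace_eq_matrix_trace ℝ (Pi.basisFun ℝ (Fin n)), Matrix.trace]
  simp

theorem differentiableAt_and_divg_eq_of_eventuallyEq {n : ℕ} {f : (Fin n → ℝ) → (Fin n → ℝ)}
    {y : Fin n → ℝ} {P : EuclideanSpace ℝ (Fin n) →L[ℝ] EuclideanSpace ℝ (Fin n)}
    (h : (fun z => toLp 2 (f (ofLp z))) =ᶠ[𝓝 (toLp 2 y)] P) :
    DifferentiableAt ℝ f y ∧ divg f y = LinearMap.trace ℝ _ P.toLinearMap := by
  set e := PiLp.continuousLinearEquiv 2 ℝ (fun _ : Fin n => ℝ)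
  have hloc : f =ᶠ[𝓝 y] (e.toContinuousLinearMap ∘L P ∘L e.symm.toContinuousLinearMap) :=
    (h.comp_tendsto (PiLp.continuous_toLp 2 _).continuousAt).fun_comp ofLp
  have hderiv := (ContinuousLinearMap.hasFDerivAt _).congr_of_eventuallyEq hloc
  refine ⟨hderiv.differentiableAt, ?_⟩
  have hconj : ((e.toContinuousLinearMap ∘L P ∘L e.symm.toContinuousLinearMap : _ →L[ℝ] _) :
      (Fin n → ℝ) →ₗ[ℝ] (Fin n → ℝ)) = e.toLinearEquiv.conj P := rfl
  rw [divg_eq_trace_of_hasFDerivAt hderiv, hconj, LinearMap.trace_conj']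

section ConvexProjection

variable {F : Type*} [NormedAddCommGroup F] [InnerProductSpace ℝ F] {K : Set F} {y θ : F}

theorem isMinOn_norm_sub_iff_inner_le_zero (hK : Convex ℝ K) (hθ : θ ∈ K) :
    IsMinOn (‖y - ·‖) K θ ↔ ∀ w ∈ K, ⟪y - θ, w - θ⟫ ≤ 0 := by
  rw [← norm_eq_iInf_iff_real_inner_le_zero hK hθ]
  refine ⟨fun h => (h.iInf_eq hθ).symm, fun h w hw => ?_⟩
  change ‖y - θ‖ ≤ ‖y - w‖
  rw [h]
  exact ciInf_le ⟨0, by rintro _ ⟨_, rfl⟩; exact norm_nonneg _⟩ (⟨w, hw⟩ : K)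

theorem IsMinOn.eq_of_isMinOn_norm_sub (hK : Convex ℝ K) {θ' : F} (hθ : θ ∈ K) (hθ' : θ' ∈ K)
    (h : IsMinOn (‖y - ·‖) K θ) (h' : IsMinOn (‖y - ·‖) K θ') : θ = θ' := by
  have h₁ := (isMinOn_norm_sub_iff_inner_le_zero hK hθ).1 h θ' hθ'
  have h₂ := (isMinOn_norm_sub_iff_inner_le_zero hK hθ').1 h' θ hθ
  have : ⟪θ' - θ, θ' - θ⟫ = ⟪y - θ, θ' - θ⟫ + ⟪y - θ', θ - θ'⟫ := by
    simp only [inner_sub_left, inner_sub_right, real_inner_comm]; ring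
  have h0 : ⟪θ' - θ, θ' - θ⟫ = 0 := le_antisymm (by linarith) real_inner_self_nonneg
  exact (sub_eq_zero.1 (inner_self_eq_zero.1 h0)).symm

end ConvexProjection

theorem EuclideanSpace.isMinOn_norm_sub_iff {ι : Type*} [Fintype ι]
    {K : Set (EuclideanSpace ℝ ι)} {y θ : EuclideanSpace ℝ ι} :
    IsMinOn (‖y - ·‖) K θ ↔ ∀ w ∈ K, ∑ j, (y j - θ j) ^ 2 ≤ ∑ j, (y j - w j) ^ 2 := by
  refine forall₂_congr fun w _ => ?_
  change ‖y - θ‖ ≤ ‖y - w‖ ↔ _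
  rw [← pow_le_pow_iff_left₀ (norm_nonneg _) (norm_nonneg _) two_ne_zero,
    EuclideanSpace.real_norm_sq_eq, EuclideanSpace.real_norm_sq_eq]
  simp

section PolyhedralCone

variable {E ι : Type*} [NormedAddCommGroup E] [InnerProductSpace ℝ E] (a : ι → E)

def polyhedralCone : Set E := {θ | ∀ i, 0 ≤ ⟪a i, θ⟫}

def activeSet (θ : E) : Set ι := {i | ⟪a i, θ⟫ = 0}

def constraintSpan (s : Set ι) : Submodule ℝ E := span ℝ (range (a ∘ ((↑) : s → ι)))

theorem convex_polyhedralCone : Convex ℝ (polyhedralCone a) := by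
  intro u hu v hv s t hs ht _ i
  rw [inner_add_right, inner_smul_right, inner_smul_right]
  exact add_nonneg (mul_nonneg hs (hu i)) (mul_nonneg ht (hv i))

variable {a} {y θ d : E}

theorem mem_orthogonal_constraintSpan_iff {s : Set ι} :
    θ ∈ (constraintSpan a s)ᗮ ↔ ∀ i ∈ s, ⟪a i, θ⟫ = 0 := by
  rw [← span_singleton_le_iff_mem (R := ℝ), ← isOrtho_iff_le, isOrtho_comm, constraintSpan,
    isOrtho_span]
  simp

variable [Finite ι]

theorem exists_add_smul_mem_polyhedralCone (hθ : θ ∈ polyhedralCone a)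
    (hd : ∀ i ∈ activeSet a θ, 0 ≤ ⟪a i, d⟫) :
    ∃ t : ℝ, 0 < t ∧ θ + t • d ∈ polyhedralCone a := by
  have key : ∀ i, ∀ᶠ t in 𝓝[>] (0 : ℝ), 0 ≤ ⟪a i, θ + t • d⟫ := by
    intro i
    rcases (hθ i).eq_or_lt with hi | hi
    · filter_upwards [self_mem_nhdsWithin] with t (ht : 0 < t)
      rw [inner_add_right, inner_smul_right, ← hi, zero_add]
      exact mul_nonneg ht.le (hd i hi.symm)
    · have hcont : Continuous fun t : ℝ => ⟪a i, θ + t • d⟫ := by fun_prop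
      refine nhdsWithin_le_nhds ((continuousAt_const.eventually_lt hcont.continuousAt ?_).mono
        fun _ h => h.le)
      simpa using hi
  exact ((eventually_all.2 key).and self_mem_nhdsWithin).exists.imp fun t h => ⟨h.2, h.1⟩

theorem IsMinOn.inner_sub_le_zero (hθ : θ ∈ polyhedralCone a)
    (h : IsMinOn (‖y - ·‖) (polyhedralCone a) θ) (hd : ∀ i ∈ activeSet a θ, 0 ≤ ⟪a i, d⟫) :
    ⟪y - θ, d⟫ ≤ 0 := by
  obtain ⟨t, ht, hmem⟩ := exists_add_smul_mem_polyhedralCone hθ hd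
  have := (isMinOn_norm_sub_iff_inner_le_zero (convex_polyhedralCone a) hθ).1 h _ hmem
  rw [add_sub_cancel_left, inner_smul_right] at this
  exact nonpos_of_mul_nonpos_right this ht

theorem IsMinOn.eq_starProjection_orthogonal [FiniteDimensional ℝ E]
    (hθ : θ ∈ polyhedralCone a) (h : IsMinOn (‖y - ·‖) (polyhedralCone a) θ) :
    θ = (constraintSpan a (activeSet a θ))ᗮ.starProjection y := by
  set W := constraintSpan a (activeSet a θ)
  have hθW : θ ∈ Wᗮ := mem_orthogonal_constraintSpan_iff.2 fun _ hi => hi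
  have hyθ : y - θ ∈ W := by
    -- the component of `y - θ` orthogonal to `W` is a feasible direction
    have hq := h.inner_sub_le_zero hθ fun i hi =>
      (mem_orthogonal_constraintSpan_iff.1 (Wᗮ.starProjection_apply_mem (y - θ)) i hi).ge
    have := Wᗮ.re_inner_starProjection_eq_normSq (y - θ)
    rw [RCLike.re_to_real, real_inner_comm] at this
    have h0 : ‖Wᗮ.orthogonalProjectionOnto (y - θ)‖ = 0 :=
      pow_eq_zero_iff two_ne_zero |>.1 (le_antisymm (this ▸ hq) (sq_nonneg _))
    rwa [norm_eq_zero, orthogonalProjectionOnto_eq_zero_iff, orthogonal_orthogonal] at h0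
  exact (eq_starProjection_of_mem_of_inner_eq_zero hθW fun w hw =>
    inner_right_of_mem_orthogonal hyθ hw).symm

end PolyhedralCone

section Multipliers

variable {E ι : Type*} [NormedAddCommGroup E] [InnerProductSpace ℝ E] {a : ι → E}
  (ha : LinearIndependent ℝ a)
include ha

noncomputable def constraintBasis (s : Set ι) : Basis s ℝ (constraintSpan a s) :=
  Basis.span (ha.comp _ Subtype.val_injective)

@[simp]
theorem coe_constraintBasis (s : Set ι) (i : s) : (constraintBasis ha s i : E) = a i :=
  Basis.coe_span_apply _ i

theorem finrank_constraintSpan (s : Set ι) : finrank ℝ (constraintSpan a s) = s.ncard := by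
  rw [finrank_eq_nat_card_basis (constraintBasis ha s), Nat.card_coe_set_eq]

variable [FiniteDimensional ℝ E] {y θ : E}

/-- When `s` is the active set of the projection `θ` of `y` onto `polyhedralCone a`, then
`y - θ = ∑ i : s, multiplier ha s i y • a i`, so the `-multiplier ha s i y` are the KKT
multipliers of the active constraints. -/
noncomputable def multiplier (s : Set ι) (i : s) : StrongDual ℝ E :=
  LinearMap.toContinuousLinearMap ((constraintBasis ha s).coord i) ∘L
    (constraintSpan a s).orthogonalProjectionOnto

theorem multiplier_apply (s : Set ι) (i : s) (y : E) :
    multiplier ha s i y =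
      (constraintBasis ha s).repr ((constraintSpan a s).orthogonalProjectionOnto y) i :=
  rfl

theorem starProjection_constraintSpan_eq_sum (s : Set ι) [Fintype s] (y : E) :
    (constraintSpan a s).starProjection y = ∑ i : s, multiplier ha s i y • a i := by
  rw [starProjection_apply,
    ← (constraintBasis ha s).sum_repr ((constraintSpan a s).orthogonalProjectionOnto y)]
  simp only [coe_sum, coe_smul, coe_constraintBasis, multiplier_apply]

theorem multiplier_apply_constraint {s : Set ι} (i j : s) :
    multiplier ha s i (a j) = Finsupp.single j 1 i := by
  have hmem : a j ∈ constraintSpan a s := subset_span ⟨j, rfl⟩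
  have : (constraintSpan a s).orthogonalProjectionOnto (a j) = constraintBasis ha s j :=
    Subtype.ext <| by rw [coe_constraintBasis]; exact starProjection_eq_self_iff.2 hmem
  rw [multiplier_apply, this, Basis.repr_self]

theorem multiplier_eq_zero_of_mem_orthogonal {s : Set ι} (i : s)
    (hθ : θ ∈ (constraintSpan a s)ᗮ) : multiplier ha s i θ = 0 := by
  rw [multiplier_apply, orthogonalProjectionOnto_eq_zero_iff.2 hθ, map_zero,
    Finsupp.coe_zero, Pi.zero_apply]

variable [Finite ι]

theorem IsMinOn.multiplier_nonpos (hθ : θ ∈ polyhedralCone a)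
    (h : IsMinOn (‖y - ·‖) (polyhedralCone a) θ) (i : activeSet a θ) :
    multiplier ha (activeSet a θ) i y ≤ 0 := by
  classical
  -- the Riesz vector of the multiplier is a feasible direction at `θ`
  set d := (InnerProductSpace.toDual ℝ E).symm (multiplier ha (activeSet a θ) i)
  have hd : ∀ j ∈ activeSet a θ, 0 ≤ ⟪a j, d⟫ := fun j hj => by
    rw [real_inner_comm, InnerProductSpace.toDual_symm_apply,
      multiplier_apply_constraint ha i ⟨j, hj⟩, Finsupp.single_apply]
    split_ifs <;> norm_num
  have := h.inner_sub_le_zero hθ hd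
  rwa [real_inner_comm, InnerProductSpace.toDual_symm_apply, map_sub,
    multiplier_eq_zero_of_mem_orthogonal ha i (mem_orthogonal_constraintSpan_iff.2 fun _ hj => hj),
    sub_zero] at this

theorem isMinOn_starProjection_orthogonal (s : Set ι) (hmult : ∀ i : s, multiplier ha s i y ≤ 0)
    (hmem : (constraintSpan a s)ᗮ.starProjection y ∈ polyhedralCone a) :
    IsMinOn (‖y - ·‖) (polyhedralCone a) ((constraintSpan a s)ᗮ.starProjection y) := by
  have := Fintype.ofFinite s
  rw [isMinOn_norm_sub_iff_inner_le_zero (convex_polyhedralCone a) hmem]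
  intro w hw
  set W := constraintSpan a s
  have hsub : y - Wᗮ.starProjection y = W.starProjection y :=
    (eq_sub_of_add_eq (starProjection_add_starProjection_orthogonal y)).symm
  have hperp : ⟪W.starProjection y, Wᗮ.starProjection y⟫ = 0 :=
    inner_right_of_mem_orthogonal (starProjection_apply_mem _ y) (starProjection_apply_mem _ y)
  rw [hsub, inner_sub_right, hperp, sub_zero, starProjection_constraintSpan_eq_sum ha, sum_inner]
  exact Finset.sum_nonpos fun i _ => by
    rw [real_inner_smul_left]; exact mul_nonpos_of_nonpos_of_nonneg (hmult i) (hw i)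

theorem eventuallyEq_starProjection_of_multiplier_ne_zero {p : E → E}
    (hp : ∀ y, p y ∈ polyhedralCone a ∧ IsMinOn (‖y - ·‖) (polyhedralCone a) (p y))
    (hy : ∀ (s : Set ι) (i : s), multiplier ha s i y ≠ 0) :
    p =ᶠ[𝓝 y] (constraintSpan a (activeSet a (p y)))ᗮ.starProjection := by
  set s := activeSet a (p y)
  set P := (constraintSpan a s)ᗮ.starProjection
  have hpy : p y = P y := (hp y).2.eq_starProjection_orthogonal (hp y).1
  have hactive : ∀ i : s, ∀ᶠ y' in 𝓝 y, multiplier ha s i y' < 0 := fun i =>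
    (multiplier ha s i).continuous.continuousAt.eventually_lt continuousAt_const
      (((hp y).2.multiplier_nonpos ha (hp y).1 i).lt_of_ne (hy s i))
  have hinactive : ∀ i, ∀ᶠ y' in 𝓝 y, i ∉ s → 0 < ⟪a i, P y'⟫ := by
    intro i
    by_cases hi : i ∈ s
    · exact Eventually.of_forall fun _ h => absurd hi h
    have hpos : 0 < ⟪a i, P y⟫ := hpy ▸ ((hp y).1 i).lt_of_ne (Ne.symm hi)
    have hcont : Continuous fun y' => ⟪a i, P y'⟫ := by fun_prop
    exact (continuousAt_const.eventually_lt hcont.continuousAt hpos).mono fun _ h _ => h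
  filter_upwards [eventually_all.2 hactive, eventually_all.2 hinactive] with y' h₁ h₂
  have hmem : P y' ∈ polyhedralCone a := fun i => by
    by_cases hi : i ∈ s
    · exact (mem_orthogonal_constraintSpan_iff.1 (starProjection_apply_mem _ y') i hi).ge
    · exact (h₂ i hi).le
  exact (hp y').2.eq_of_isMinOn_norm_sub (convex_polyhedralCone a) (hp y').1 hmem
    (isMinOn_starProjection_orthogonal ha s (fun i => (h₁ i).le) hmem)

variable [MeasurableSpace E] [BorelSpace E] (μ : Measure E) [μ.IsAddHaarMeasure]

theorem ae_multiplier_ne_zero : ∀ᵐ y ∂μ, ∀ (s : Set ι) (i : s), multiplier ha s i y ≠ 0 := by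
  simp only [ae_all_iff]
  intro s i
  have hker : LinearMap.ker (multiplier ha s i : E →ₗ[ℝ] ℝ) ≠ ⊤ := fun htop => by
    have : a i ∈ LinearMap.ker (multiplier ha s i : E →ₗ[ℝ] ℝ) := htop ▸ mem_top
    rw [LinearMap.mem_ker, ContinuousLinearMap.coe_coe, multiplier_apply_constraint ha i i,
      Finsupp.single_eq_same] at this
    exact one_ne_zero this
  rw [ae_iff]
  convert Measure.addHaar_submodule μ _ hker
  ext
  simp

theorem ae_eventuallyEq_starProjection {p : E → E}
    (hp : ∀ y, p y ∈ polyhedralCone a ∧ IsMinOn (‖y - ·‖) (polyhedralCone a) (p y)) :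
    ∀ᵐ y ∂μ, p =ᶠ[𝓝 y] (constraintSpan a (activeSet a (p y)))ᗮ.starProjection :=
  (ae_multiplier_ne_zero ha μ).mono fun _ hy =>
    eventuallyEq_starProjection_of_multiplier_ne_zero ha hp hy

end Multipliers

section ConvexRegression

variable {n : ℕ} (x : Fin n → ℝ)

noncomputable def slopeChange (k : Fin (n - 2)) : EuclideanSpace ℝ (Fin n) :=
  (x ⟨k + 2, by omega⟩ - x ⟨k + 1, by omega⟩)⁻¹ •
      (EuclideanSpace.single ⟨k + 2, by omega⟩ 1 - EuclideanSpace.single ⟨k + 1, by omega⟩ 1) -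
    (x ⟨k + 1, by omega⟩ - x ⟨k, by omega⟩)⁻¹ •
      (EuclideanSpace.single ⟨k + 1, by omega⟩ 1 - EuclideanSpace.single ⟨k, by omega⟩ 1)

theorem inner_slopeChange (k : Fin (n - 2)) (θ : EuclideanSpace ℝ (Fin n)) :
    ⟪slopeChange x k, θ⟫ =
      (θ ⟨k + 2, by omega⟩ - θ ⟨k + 1, by omega⟩) / (x ⟨k + 2, by omega⟩ - x ⟨k + 1, by omega⟩) -
        (θ ⟨k + 1, by omega⟩ - θ ⟨k, by omega⟩) / (x ⟨k + 1, by omega⟩ - x ⟨k, by omega⟩) := by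
  simp only [slopeChange, inner_sub_left, real_inner_smul_left, EuclideanSpace.inner_single_left,
    map_one, one_mul]
  ring

theorem slopeChange_apply_of_lt {k : Fin (n - 2)} {j : Fin n} (hj : j.1 < k.1) :
    slopeChange x k j = 0 := by
  simp [slopeChange, Fin.ext_iff, hj.ne, (hj.trans (Nat.lt_succ_self k)).ne,
    (hj.trans (by omega : k.1 < k.1 + 2)).ne]

theorem slopeChange_apply_self (k : Fin (n - 2)) :
    slopeChange x k ⟨k, by omega⟩ = (x ⟨k + 1, by omega⟩ - x ⟨k, by omega⟩)⁻¹ := by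
  simp [slopeChange, Fin.ext_iff]

variable {x}

theorem linearIndependent_slopeChange (hx : StrictMono x) :
    LinearIndependent ℝ (slopeChange x) := by
  refine linearIndependent_of_triangular
    (fun j => (EuclideanSpace.proj (⟨j, by omega⟩ : Fin n) : EuclideanSpace ℝ (Fin n) →L[ℝ] ℝ))
    (fun j k hjk => slopeChange_apply_of_lt x hjk) (fun k => ?_)
  have : x ⟨k, by omega⟩ < x ⟨k + 1, by omega⟩ := hx (Fin.mk_lt_mk.2 (by omega))
  simpa [slopeChange_apply_self] using (sub_pos.2 this).ne'

theorem toLp_mem_polyhedralCone_slopeChange_iff (θ : Fin n → ℝ) :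
    toLp 2 θ ∈ polyhedralCone (slopeChange x) ↔ ∀ i : ℕ, ∀ h : i + 2 < n,
      (θ ⟨i + 1, by linarith⟩ - θ ⟨i, by linarith⟩) / (x ⟨i + 1, by linarith⟩ - x ⟨i, by linarith⟩)
        ≤ (θ ⟨i + 2, h⟩ - θ ⟨i + 1, by linarith⟩) / (x ⟨i + 2, h⟩ - x ⟨i + 1, by linarith⟩) := by
  refine ⟨fun h i hi => ?_, fun h k => ?_⟩
  · have := h ⟨i, by omega⟩
    rwa [inner_slopeChange, sub_nonneg] at this
  · rw [inner_slopeChange, sub_nonneg]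
    exact h k (by omega)

theorem ncard_slope_increase_add_ncard_activeSet (θ : Fin n → ℝ)
    (hθ : toLp 2 θ ∈ polyhedralCone (slopeChange x)) :
    {i : ℕ | ∃ h : i + 2 < n,
        (θ ⟨i + 1, by linarith⟩ - θ ⟨i, by linarith⟩) /
            (x ⟨i + 1, by linarith⟩ - x ⟨i, by linarith⟩) <
          (θ ⟨i + 2, h⟩ - θ ⟨i + 1, by linarith⟩) / (x ⟨i + 2, h⟩ - x ⟨i + 1, by linarith⟩)}.ncard +
      (activeSet (slopeChange x) (toLp 2 θ)).ncard = n - 2 := by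
  have h := Set.ncard_compl_add_ncard (activeSet (slopeChange x) (toLp 2 θ))
  rw [Nat.card_eq_fintype_card, Fintype.card_fin,
    ← Set.ncard_image_of_injective _ Fin.val_injective] at h
  convert h using 3
  ext i
  simp only [Set.mem_ofPred_eq, Set.mem_image, Set.mem_compl_iff, activeSet]
  constructor
  · rintro ⟨h, hlt⟩
    refine ⟨⟨i, by omega⟩, ?_, rfl⟩
    rw [inner_slopeChange]
    exact (sub_pos.2 hlt).ne'
  · rintro ⟨k, hk, rfl⟩
    refine ⟨by omega, ?_⟩
    have := (hθ k).lt_of_ne (Ne.symm hk)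
    rwa [inner_slopeChange, sub_pos] at this

end ConvexRegression

/-- For the metric projection `θ̂` onto the univariate convex regression
cone (nondecreasing consecutive slopes w.r.t. strictly increasing design points `x`),
for almost every `y` the map `θ̂` is differentiable at `y` with divergence `s + 2`, where
`s` is the number of strict changes of slope of the fit `θ̂(y)`. -/
theorem divergence_univariate_convex_regression {n : ℕ} (hn : 2 ≤ n)
    (x : Fin n → ℝ) (hx : StrictMono x)
    (C : Set (Fin n → ℝ))
    (hC : C = {θ | ∀ i : ℕ, ∀ h : i + 2 < n,
      (θ ⟨i + 1, by omega⟩ - θ ⟨i, by omega⟩) / (x ⟨i + 1, by omega⟩ - x ⟨i, by omega⟩)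
        ≤ (θ ⟨i + 2, h⟩ - θ ⟨i + 1, by omega⟩) / (x ⟨i + 2, h⟩ - x ⟨i + 1, by omega⟩)})
    (θhat : (Fin n → ℝ) → (Fin n → ℝ))
    (hproj : ∀ y, θhat y ∈ C ∧ ∀ θ ∈ C, ∑ j, (y j - θhat y j) ^ 2 ≤ ∑ j, (y j - θ j) ^ 2) :
    ∀ᵐ y ∂(volume : Measure (Fin n → ℝ)), DifferentiableAt ℝ θhat y ∧
      divg θhat y =
        (Set.ncard {i : ℕ | ∃ h : i + 2 < n,
          (θhat y ⟨i + 1, by omega⟩ - θhat y ⟨i, by omega⟩)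
              / (x ⟨i + 1, by omega⟩ - x ⟨i, by omega⟩)
            < (θhat y ⟨i + 2, h⟩ - θhat y ⟨i + 1, by omega⟩)
              / (x ⟨i + 2, h⟩ - x ⟨i + 1, by omega⟩)} : ℝ) + 2 := by
  have ha := linearIndependent_slopeChange hx
  have hCa : ∀ θ, θ ∈ C ↔ toLp 2 θ ∈ polyhedralCone (slopeChange x) := fun θ => by
    rw [hC, toLp_mem_polyhedralCone_slopeChange_iff]; rfl
  set p : EuclideanSpace ℝ (Fin n) → EuclideanSpace ℝ (Fin n) := fun z => toLp 2 (θhat (ofLp z))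
  have hp : ∀ z, p z ∈ polyhedralCone (slopeChange x) ∧
      IsMinOn (‖z - ·‖) (polyhedralCone (slopeChange x)) (p z) := fun z =>
    ⟨(hCa _).1 (hproj _).1,
      EuclideanSpace.isMinOn_norm_sub_iff.2 fun w hw => (hproj _).2 _ ((hCa _).2 hw)⟩
  filter_upwards [(PiLp.volume_preserving_toLp (Fin n)).quasiMeasurePreserving.ae
    (ae_eventuallyEq_starProjection ha volume hp)] with y hy
  obtain ⟨hdiff, hdivg⟩ := differentiableAt_and_divg_eq_of_eventuallyEq hy
  refine ⟨hdiff, ?_⟩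
  have hcount := ncard_slope_increase_add_ncard_activeSet (θhat y) (hp (toLp 2 y)).1
  set W := constraintSpan (slopeChange x) (activeSet (slopeChange x) (toLp 2 (θhat y)))
  have hW := W.finrank_add_finrank_orthogonal
  rw [finrank_euclideanSpace_fin, finrank_constraintSpan ha] at hW
  rw [hdivg, Submodule.trace_starProjection]
  exact_mod_cast (by omega : finrank ℝ Wᗮ = _ + 2)
end

section
/- Let Q = {(ξ,θ) ∈ ℝ^{p+n} : Aξ + Bθ ≤ c} be a nonempty polyhedron with A ∈ ℝ^{m×p}, B ∈ ℝ^{m×n}, c ∈ ℝᵐ, and let d ∈ ℝᵖ satisfy −d = Aᵀλ₀ for some λ₀ ≥ 0. For y ∈ ℝⁿ let (θ̂(y), ξ̂(y)) be a minimizer of (1/2)‖θ − y‖₂² + dᵀξ over Q. Then: (i) the θ-component θ̂(y) is unique for each y; (ii) for Lebesgue-almost every y ∈ ℝⁿ, θ̂ is differentiable at y and its divergence equals D(y) = n − |I_y| + rank(A_{I_y}), where J_y = {1 ≤ i ≤ m : ⟨a_i, ξ̂(y)⟩ + ⟨b_i, θ̂(y)⟩ = c_i} is the set of binding constraints, I_y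 ⊆ J_y is any index set such that the rows {[a_iᵀ, b_iᵀ] : i ∈ I_y} form a maximal linearly independent subset of the rows of [A_{J_y}, B_{J_y}], and A_{I_y} is the submatrix of A with rows in I_y. -/
/-!
Writing the minimality of `(ξ̂, θ̂)` as a variational inequality shows that `θ̂` is monotone and
nonexpansive; hence it is unique, Lipschitz, and differentiable almost everywhere (Rademacher).
Almost every `y` is also a Lebesgue density point of the set of `y'` with the same binding set
`J_y`, so the tangent cone of that set at `y` is the whole space. Between two such points the
difference of the minimizers lies in `K = ker [A_I, B_I]`, so `Dθ̂(y)` maps into the projection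
`T` of `K` to the `θ`-coordinates. Conversely, moving `y` along a direction of `T` keeps the
binding rows binding and translates `θ̂` by the same amount, so `Dθ̂(y)` fixes `T`. Thus `Dθ̂(y)`
is a projection onto `T`, whose trace is `dim T = n - |I| + rank A_I` by rank–nullity.
-/

open Matrix MeasureTheory

open Module Filter Topology Set Metric
open scoped Pointwise

theorem nonneg_of_forall_mul_add_sq_nonneg {L Q : ℝ}
    (h : ∀ s : ℝ, 0 < s → s ≤ 1 → 0 ≤ s * L + s ^ 2 * Q) : 0 ≤ L := by
  have hlim : Tendsto (fun s : ℝ => L + s * Q) (𝓝[>] 0) (𝓝 L) :=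
    ((by fun_prop : Continuous fun s : ℝ => L + s * Q).tendsto' 0 L (by simp)).mono_left
      nhdsWithin_le_nhds
  refine ge_of_tendsto hlim ?_
  filter_upwards [Ioc_mem_nhdsGT one_pos] with s ⟨hs, hs1⟩
  nlinarith [h s hs hs1]

theorem eventually_smul_le {ι : Type*} [Finite ι] {s g : ι → ℝ} (hs : 0 ≤ s)
    (hg : ∀ i, s i = 0 → g i = 0) : ∀ᶠ t in 𝓝 (0 : ℝ), t • g ≤ s := by
  simp only [Pi.le_def, Pi.smul_apply, smul_eq_mul, Filter.eventually_all]
  intro i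
  rcases (hs i).eq_or_lt with h | h
  · exact Eventually.of_forall fun t => by simpa [hg i h.symm] using hs i
  · have : Tendsto (fun t : ℝ => t * g i) (𝓝 0) (𝓝 0) :=
      (by fun_prop : Continuous fun t : ℝ => t * g i).tendsto' 0 0 (zero_mul _)
    exact (this.eventually (gt_mem_nhds h)).mono fun t ht => ht.le

section DotProduct

variable {σ : Type*} [Fintype σ]

theorem dotProduct_self_nonneg {R : Type*} [CommRing R] [LinearOrder R] [IsStrictOrderedRing R]
    (v : σ → R) : 0 ≤ v ⬝ᵥ v :=
  Finset.sum_nonneg fun i _ => mul_self_nonneg (v i)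

theorem sq_apply_le_dotProduct_self {R : Type*} [CommRing R] [LinearOrder R]
    [IsStrictOrderedRing R] (x : σ → R) (j : σ) : x j ^ 2 ≤ x ⬝ᵥ x := by
  rw [sq]
  exact Finset.single_le_sum (fun i _ => mul_self_nonneg (x i)) (Finset.mem_univ j)

theorem dotProduct_self_le_card_mul_norm_sq (x : σ → ℝ) :
    x ⬝ᵥ x ≤ Fintype.card σ * ‖x‖ ^ 2 := by
  calc x ⬝ᵥ x ≤ ∑ _j : σ, ‖x‖ ^ 2 := Finset.sum_le_sum fun j _ => by
        simpa [Real.norm_eq_abs, sq_abs, sq] using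
          pow_le_pow_left₀ (norm_nonneg _) (norm_le_pi_norm x j) 2
    _ = _ := by simp

theorem lipschitzWith_of_dotProduct_self_sub_le {f : (σ → ℝ) → σ → ℝ}
    (hf : ∀ y y', (f y - f y') ⬝ᵥ (f y - f y') ≤ (y - y') ⬝ᵥ (y - y')) :
    LipschitzWith (NNReal.sqrt (Fintype.card σ)) f := by
  refine LipschitzWith.of_dist_le_mul fun y y' => (dist_pi_le_iff (by positivity)).2 fun j => ?_
  rw [Real.dist_eq, Real.coe_sqrt, NNReal.coe_natCast, dist_eq_norm,
    ← Real.sqrt_sq (norm_nonneg (y - y')), ← Real.sqrt_mul (Nat.cast_nonneg _)]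
  refine Real.abs_le_sqrt ?_
  calc (f y j - f y' j) ^ 2 ≤ (f y - f y') ⬝ᵥ (f y - f y') :=
        sq_apply_le_dotProduct_self (f y - f y') j
    _ ≤ (y - y') ⬝ᵥ (y - y') := hf y y'
    _ ≤ _ := dotProduct_self_le_card_mul_norm_sq _

theorem dotProduct_eq_zero_of_mem_span {s : Set (σ → ℝ)} {x w : σ → ℝ}
    (hx : ∀ r ∈ s, r ⬝ᵥ x = 0) (hw : w ∈ Submodule.span ℝ s) : w ⬝ᵥ x = 0 :=
  (Submodule.span_le (p := LinearMap.ker ((dotProductBilin ℝ ℝ).flip x)).2 hx) hw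

end DotProduct

theorem Fin.append_dotProduct_append {p n : ℕ} (a u : Fin p → ℝ) (b v : Fin n → ℝ) :
    Fin.append a b ⬝ᵥ Fin.append u v = a ⬝ᵥ u + b ⬝ᵥ v := by
  simp [dotProduct, Fin.sum_univ_add]

section Derivative

variable {𝕜 E F : Type*} [NontriviallyNormedField 𝕜] [NormedAddCommGroup E] [NormedSpace 𝕜 E]
  [NormedAddCommGroup F] [NormedSpace 𝕜 F] {f : E → F}

theorem HasFDerivWithinAt.apply_mem_of_mem_tangentConeAt {f' : E →L[𝕜] F} {s : Set E} {x : E}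
    (hf : HasFDerivWithinAt f f' s x) {T : Submodule 𝕜 F} (hT : IsClosed (T : Set F))
    (hs : ∀ y ∈ s, f y - f x ∈ T) {v : E} (hv : v ∈ tangentConeAt 𝕜 s x) : f' v ∈ T := by
  obtain ⟨α, l, hl, c, d, hd₀, hds, hcd⟩ := exists_fun_of_mem_tangentConeAt hv
  exact hT.mem_of_tendsto (hf.lim hd₀ hds hcd) (hds.mono fun n hn => T.smul_mem _ (hs _ hn))

theorem fderiv_apply_eq_of_eventually_add_smul {x v : E} {w : F} (hf : DifferentiableAt 𝕜 f x)
    (h : ∀ᶠ t in 𝓝 (0 : 𝕜), f (x + t • v) = f x + t • w) : fderiv 𝕜 f x v = w := by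
  have hline : HasDerivAt (fun t : 𝕜 => x + t • v) v 0 := by
    simpa using ((hasDerivAt_id (0 : 𝕜)).smul_const v).const_add x
  have hf' : HasFDerivAt f (fderiv 𝕜 f x) (x + (0 : 𝕜) • v) := by
    simpa using hf.hasFDerivAt
  have haffine : HasDerivAt (fun t : 𝕜 => f x + t • w) w 0 := by
    simpa using ((hasDerivAt_id (0 : 𝕜)).smul_const w).const_add (f x)
  exact (hf'.comp_hasDerivAt 0 hline).unique (haffine.congr_of_eventuallyEq h)

end Derivative

theorem LinearMap.trace_eq_sum_apply_single {R ι : Type*} [CommRing R] [Fintype ι]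
    [DecidableEq ι] (L : (ι → R) →ₗ[R] ι → R) :
    LinearMap.trace R _ L = ∑ i, L (Pi.single i 1) i := by
  rw [LinearMap.trace_eq_matrix_trace R (Pi.basisFun R ι), LinearMap.toMatrix_eq_toMatrix',
    Matrix.trace]
  simp [LinearMap.toMatrix'_apply]

theorem divg_eq_trace {n : ℕ} (f : (Fin n → ℝ) → Fin n → ℝ) (y : Fin n → ℝ) :
    divg f y = LinearMap.trace ℝ _ (fderiv ℝ f y : (Fin n → ℝ) →ₗ[ℝ] Fin n → ℝ) :=
  (LinearMap.trace_eq_sum_apply_single _).symm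

section DensityPoint

variable {E : Type*} [NormedAddCommGroup E] [NormedSpace ℝ E] [MeasurableSpace E] [BorelSpace E]
  [FiniteDimensional ℝ E] (μ : Measure E) [μ.IsAddHaarMeasure]

theorem tangentConeAt_eq_univ_of_density_one {s : Set E} {x : E}
    (h : Tendsto (fun r => μ (s ∩ closedBall x r) / μ (closedBall x r)) (𝓝[>] 0) (𝓝 1)) :
    tangentConeAt ℝ s x = univ := by
  refine eq_univ_of_forall fun v => ?_
  rw [tangentConeAt_eq_biInter_closure]
  refine mem_iInter₂.2 fun U hU => Metric.mem_closure_iff.2 fun ε hε => ?_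
  have hsmall : ∀ᶠ r in 𝓝[>] (0 : ℝ), {0} + r • closedBall v (ε / 2) ⊆ U :=
    nhdsWithin_le_nhds (eventually_singleton_add_smul_subset isBounded_closedBall hU)
  have hmeet := Measure.eventually_nonempty_inter_smul_of_density_one μ s x h
    (closedBall v (ε / 2)) measurableSet_closedBall (measure_closedBall_pos μ v (half_pos hε)).ne'
  obtain ⟨r, hsub, ⟨z, hzs, hz⟩, hr⟩ := (hsmall.and (hmeet.and self_mem_nhdsWithin)).exists
  obtain ⟨w, hw, hwz⟩ : ∃ w ∈ closedBall v (ε / 2), r • w = -x + z := by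
    simpa [singleton_add, mem_smul_set] using hz
  rw [← add_neg_cancel_left x z, ← hwz] at hzs
  refine ⟨w, ⟨r⁻¹, mem_univ _, r • w, ⟨hsub ?_, hzs⟩, inv_smul_smul₀ (ne_of_gt hr) w⟩,
    (mem_closedBall'.1 hw).trans_lt (half_lt_self hε)⟩
  simpa [singleton_add] using smul_mem_smul_set hw

theorem ae_tangentConeAt_fiber_eq_univ {α : Type*} [Countable α] (g : E → α) :
    ∀ᵐ x ∂μ, tangentConeAt ℝ (g ⁻¹' {g x}) x = univ := by
  have := ae_all_iff.2 fun a : α =>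
    ae_imp_of_ae_restrict (Besicovitch.ae_tendsto_measure_inter_div μ (g ⁻¹' {a}))
  filter_upwards [this] with x hx
  exact tangentConeAt_eq_univ_of_density_one μ (hx (g x) rfl)

end DensityPoint

section PartialProjection

variable {ι κ σ : Type*} [Fintype κ] [Fintype σ]
  (A : Matrix ι κ ℝ) (B : Matrix ι σ ℝ) (c : ι → ℝ) (d : κ → ℝ)

def constraintMap : (κ → ℝ) × (σ → ℝ) →ₗ[ℝ] ι → ℝ := A.mulVecLin.coprod B.mulVecLin

theorem convex_constraintMap_preimage_Iic : Convex ℝ (constraintMap A B ⁻¹' Iic c) :=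
  (convex_Iic c).linear_preimage _

theorem ker_constraintMap_inf_ker_snd :
    LinearMap.ker (constraintMap A B) ⊓ LinearMap.ker (LinearMap.snd ℝ _ _) =
      (LinearMap.ker A.mulVecLin).map (LinearMap.inl ℝ _ (σ → ℝ)) := by
  rw [LinearMap.ker_snd, inf_comm, ← Submodule.map_comap_eq, ← LinearMap.ker_comp,
    constraintMap, LinearMap.coprod_inl]

noncomputable def partialProjObjective (y : σ → ℝ) (ξ : κ → ℝ) (θ : σ → ℝ) : ℝ :=
  1 / 2 * ∑ j, (θ j - y j) ^ 2 + d ⬝ᵥ ξ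

def IsPartialProjMin (y : σ → ℝ) (ξ : κ → ℝ) (θ : σ → ℝ) : Prop :=
  A *ᵥ ξ + B *ᵥ θ ≤ c ∧ ∀ ξ' θ', A *ᵥ ξ' + B *ᵥ θ' ≤ c →
    partialProjObjective d y ξ θ ≤ partialProjObjective d y ξ' θ'

variable {A B c d}

theorem partialProjObjective_add (y : σ → ℝ) (ξ u : κ → ℝ) (θ v : σ → ℝ) :
    partialProjObjective d y (ξ + u) (θ + v) = partialProjObjective d y ξ θ
      + ((θ - y) ⬝ᵥ v + d ⬝ᵥ u) + 1 / 2 * (v ⬝ᵥ v) := by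
  have hsq : 1 / 2 * ∑ j, ((θ + v) j - y j) ^ 2
      = 1 / 2 * ∑ j, (θ j - y j) ^ 2 + (θ - y) ⬝ᵥ v + 1 / 2 * (v ⬝ᵥ v) := by
    simp only [dotProduct, Finset.mul_sum, ← Finset.sum_add_distrib]
    exact Finset.sum_congr rfl fun j _ => by simp only [Pi.add_apply, Pi.sub_apply]; ring
  rw [partialProjObjective, partialProjObjective, hsq, dotProduct_add]
  ring

theorem isPartialProjMin_iff {y : σ → ℝ} {ξ₀ : κ → ℝ} {θ₀ : σ → ℝ} :
    IsPartialProjMin A B c d y ξ₀ θ₀ ↔ A *ᵥ ξ₀ + B *ᵥ θ₀ ≤ c ∧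
      ∀ ξ θ, A *ᵥ ξ + B *ᵥ θ ≤ c → 0 ≤ (θ₀ - y) ⬝ᵥ (θ - θ₀) + d ⬝ᵥ (ξ - ξ₀) := by
  refine and_congr_right fun hfeas => ⟨fun hmin ξ θ hξθ => ?_, fun hvi ξ θ hξθ => ?_⟩
  · refine nonneg_of_forall_mul_add_sq_nonneg (Q := 1 / 2 * ((θ - θ₀) ⬝ᵥ (θ - θ₀)))
      fun s hs hs1 => ?_
    have hseg := (convex_constraintMap_preimage_Iic A B c).add_smul_sub_mem
      (x := (ξ₀, θ₀)) (y := (ξ, θ)) hfeas hξθ ⟨hs.le, hs1⟩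
    have := hmin (ξ₀ + s • (ξ - ξ₀)) (θ₀ + s • (θ - θ₀)) hseg
    rw [partialProjObjective_add] at this
    simp only [dotProduct_smul, smul_dotProduct, smul_eq_mul] at this
    nlinarith
  · have hexp := partialProjObjective_add (d := d) y ξ₀ (ξ - ξ₀) θ₀ (θ - θ₀)
    rw [add_sub_cancel, add_sub_cancel] at hexp
    linarith [hvi ξ θ hξθ, dotProduct_self_nonneg (θ - θ₀)]

namespace IsPartialProjMin

variable {y y₀ y₁ : σ → ℝ} {ξ₀ ξ₁ : κ → ℝ} {θ₀ θ₁ : σ → ℝ}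

theorem variational_ineq (h : IsPartialProjMin A B c d y ξ₀ θ₀) {ξ : κ → ℝ} {θ : σ → ℝ}
    (hfeas : A *ᵥ ξ + B *ᵥ θ ≤ c) : 0 ≤ (θ₀ - y) ⬝ᵥ (θ - θ₀) + d ⬝ᵥ (ξ - ξ₀) :=
  (isPartialProjMin_iff.1 h).2 ξ θ hfeas

theorem sub_dotProduct_sub_le (h₀ : IsPartialProjMin A B c d y₀ ξ₀ θ₀)
    (h₁ : IsPartialProjMin A B c d y₁ ξ₁ θ₁) :
    (θ₀ - θ₁) ⬝ᵥ (θ₀ - θ₁) ≤ (θ₀ - θ₁) ⬝ᵥ (y₀ - y₁) := by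
  have h₀₁ := h₀.variational_ineq h₁.1
  have h₁₀ := h₁.variational_ineq h₀.1
  simp only [dotProduct_sub, sub_dotProduct] at h₀₁ h₁₀ ⊢
  linarith [dotProduct_comm θ₁ θ₀, dotProduct_comm y₀ θ₀, dotProduct_comm y₀ θ₁,
    dotProduct_comm y₁ θ₀, dotProduct_comm y₁ θ₁]

theorem theta_eq (h₀ : IsPartialProjMin A B c d y ξ₀ θ₀) (h₁ : IsPartialProjMin A B c d y ξ₁ θ₁) :
    θ₁ = θ₀ := by
  have hle := h₀.sub_dotProduct_sub_le h₁
  rw [sub_self, dotProduct_zero] at hle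
  have := dotProduct_self_eq_zero.1 (le_antisymm hle (dotProduct_self_nonneg _))
  exact (sub_eq_zero.1 this).symm

theorem sub_dotProduct_sub_le_sub_dotProduct_sub (h₀ : IsPartialProjMin A B c d y₀ ξ₀ θ₀)
    (h₁ : IsPartialProjMin A B c d y₁ ξ₁ θ₁) :
    (θ₀ - θ₁) ⬝ᵥ (θ₀ - θ₁) ≤ (y₀ - y₁) ⬝ᵥ (y₀ - y₁) := by
  have hmono := h₀.sub_dotProduct_sub_le h₁
  have hsq := dotProduct_self_nonneg ((θ₀ - θ₁) - (y₀ - y₁))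
  simp only [dotProduct_sub, sub_dotProduct] at hmono hsq ⊢
  linarith [dotProduct_comm θ₁ θ₀, dotProduct_comm y₀ θ₀, dotProduct_comm y₀ θ₁,
    dotProduct_comm y₁ θ₀, dotProduct_comm y₁ θ₁, dotProduct_comm y₁ y₀]

theorem eventually_add_smul [Finite ι] (h : IsPartialProjMin A B c d y ξ₀ θ₀)
    {u : κ → ℝ} {v : σ → ℝ}
    (huv : ∀ i, (A *ᵥ ξ₀ + B *ᵥ θ₀) i = c i → (A *ᵥ u + B *ᵥ v) i = 0) :
    ∀ᶠ t in 𝓝 (0 : ℝ), IsPartialProjMin A B c d (y + t • v) (ξ₀ + t • u) (θ₀ + t • v) := by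
  have hfeas : ∀ᶠ t in 𝓝 (0 : ℝ), A *ᵥ (ξ₀ + t • u) + B *ᵥ (θ₀ + t • v) ≤ c := by
    filter_upwards [eventually_smul_le (sub_nonneg.2 h.1)
      fun i hi => huv i (sub_eq_zero.1 hi).symm] with t ht
    convert le_sub_iff_add_le'.1 ht using 1
    simp only [mulVec_add, mulVec_smul, smul_add]
    abel
  have hslope : ∀ t, A *ᵥ (ξ₀ + t • u) + B *ᵥ (θ₀ + t • v) ≤ c →
      0 ≤ t * ((θ₀ - y) ⬝ᵥ v + d ⬝ᵥ u) := fun t ht => by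
    simpa [mul_add] using h.variational_ineq ht
  -- the line through `(ξ₀, θ₀)` is feasible on both sides of it, so its slope vanishes
  have hzero : (θ₀ - y) ⬝ᵥ v + d ⬝ᵥ u = 0 := by
    obtain ⟨tpos, htpos, htpos_pos⟩ :=
      ((hfeas.filter_mono nhdsWithin_le_nhds).and (self_mem_nhdsWithin (s := Ioi 0))).exists
    obtain ⟨tneg, htneg, htneg_neg⟩ :=
      ((hfeas.filter_mono nhdsWithin_le_nhds).and (self_mem_nhdsWithin (s := Iio 0))).exists
    have hpos := hslope tpos htpos
    have hneg := hslope tneg htneg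
    have : (0 : ℝ) < tpos := htpos_pos
    have : tneg < 0 := htneg_neg
    nlinarith
  filter_upwards [hfeas] with t ht
  refine isPartialProjMin_iff.2 ⟨ht, fun ξ θ hξθ => ?_⟩
  have hvi := h.variational_ineq hξθ
  rw [add_sub_add_right_eq_sub, sub_add_eq_sub_sub, sub_add_eq_sub_sub]
  simp only [dotProduct_sub, dotProduct_smul, smul_eq_mul] at hvi ⊢
  linarith [congrArg (t * ·) hzero]

end IsPartialProjMin

theorem lipschitzWith_of_isPartialProjMin {θhat : (σ → ℝ) → σ → ℝ} {ξhat : (σ → ℝ) → κ → ℝ}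
    (h : ∀ y, IsPartialProjMin A B c d y (ξhat y) (θhat y)) :
    LipschitzWith (NNReal.sqrt (Fintype.card σ)) θhat :=
  lipschitzWith_of_dotProduct_self_sub_le fun y y' => (h y).sub_dotProduct_sub_le_sub_dotProduct_sub (h y')

end PartialProjection

section BindingRows

variable {ι ι' : Type*} {p n : ℕ} (A : Matrix ι (Fin p) ℝ) (B : Matrix ι (Fin n) ℝ)

theorem range_constraintMap_eq_range_mulVecLin :
    LinearMap.range (constraintMap A B) =
      LinearMap.range (of fun i => Fin.append (A i) (B i)).mulVecLin := by
  have happend : ∀ u v, (of fun i => Fin.append (A i) (B i)) *ᵥ Fin.append u v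
      = constraintMap A B (u, v) := fun u v => by
    ext i
    exact Fin.append_dotProduct_append _ _ _ _
  ext z
  constructor
  · rintro ⟨⟨u, v⟩, rfl⟩
    exact ⟨Fin.append u v, happend u v⟩
  · rintro ⟨w, rfl⟩
    refine ⟨(fun j => w (Fin.castAdd n j), fun j => w (Fin.natAdd p j)), ?_⟩
    rw [← happend, Fin.append_castAdd_natAdd]
    rfl

theorem finrank_ker_constraintMap_add_card [Fintype ι]
    (hli : LinearIndependent ℝ fun i => Fin.append (A i) (B i)) :
    finrank ℝ (LinearMap.ker (constraintMap A B)) + Fintype.card ι = p + n := by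
  have hrange : finrank ℝ (LinearMap.range (constraintMap A B)) = Fintype.card ι := by
    rw [range_constraintMap_eq_range_mulVecLin]
    exact (rank_eq_finrank_span_row _).trans (finrank_span_eq_card hli)
  have := LinearMap.finrank_range_add_finrank_ker (constraintMap A B)
  rw [finrank_prod, finrank_fin_fun, finrank_fin_fun] at this
  omega

theorem finrank_map_snd_ker_constraintMap_add_card [Fintype ι]
    (hli : LinearIndependent ℝ fun i => Fin.append (A i) (B i)) :
    finrank ℝ ((LinearMap.ker (constraintMap A B)).map (LinearMap.snd ℝ _ _)) + Fintype.card ι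
      = n + A.rank := by
  set K := LinearMap.ker (constraintMap A B)
  have hK : finrank ℝ K + Fintype.card ι = p + n := finrank_ker_constraintMap_add_card A B hli
  have hsnd := LinearMap.finrank_range_add_finrank_ker (LinearMap.snd ℝ _ (Fin n → ℝ) ∘ₗ K.subtype)
  rw [LinearMap.range_comp, Submodule.range_subtype, LinearMap.ker_comp,
    ← Submodule.finrank_map_subtype_eq, Submodule.map_comap_subtype,
    ker_constraintMap_inf_ker_snd,
    ← (Submodule.equivMapOfInjective _ LinearMap.inl_injective _).finrank_eq] at hsnd
  have hA := LinearMap.finrank_range_add_finrank_ker A.mulVecLin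
  rw [finrank_fin_fun] at hA
  change A.rank + _ = p at hA
  omega

variable {A B}

theorem sub_mem_ker_constraintMap_submatrix (e : ι' → ι) {c : ι → ℝ} {ξ ξ' : Fin p → ℝ}
    {θ θ' : Fin n → ℝ} (h : ∀ i, (A *ᵥ ξ + B *ᵥ θ) (e i) = c (e i))
    (h' : ∀ i, (A *ᵥ ξ' + B *ᵥ θ') (e i) = c (e i)) :
    (ξ' - ξ, θ' - θ) ∈ LinearMap.ker (constraintMap (A.submatrix e id) (B.submatrix e id)) := by
  refine LinearMap.mem_ker.2 (funext fun i => ?_)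
  have hi := h i
  have hi' := h' i
  simp only [Pi.add_apply, mulVec] at hi hi'
  simp only [constraintMap, LinearMap.coprod_apply, mulVecLin_apply, Pi.add_apply, mulVec,
    dotProduct_sub, submatrix_apply, id, Pi.zero_apply]
  linarith

theorem apply_eq_zero_of_mem_ker_constraintMap_submatrix (e : ι' → ι) {u : Fin p → ℝ}
    {v : Fin n → ℝ}
    (huv : (u, v) ∈ LinearMap.ker (constraintMap (A.submatrix e id) (B.submatrix e id))) {j : ι}
    (hj : Fin.append (A j) (B j) ∈
      Submodule.span ℝ (range fun i => Fin.append (A (e i)) (B (e i)))) :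
    (A *ᵥ u + B *ᵥ v) j = 0 := by
  refine (Fin.append_dotProduct_append _ _ _ _).symm.trans
    (dotProduct_eq_zero_of_mem_span ?_ hj)
  rintro _ ⟨i, rfl⟩
  rw [Fin.append_dotProduct_append]
  exact congrFun (LinearMap.mem_ker.1 huv) i

end BindingRows

theorem divergence_linearly_perturbed_partial_projection_general {m p n : ℕ}
    (A : Matrix (Fin m) (Fin p) ℝ) (B : Matrix (Fin m) (Fin n) ℝ)
    (c : Fin m → ℝ) (d : Fin p → ℝ)
    (θhat : (Fin n → ℝ) → (Fin n → ℝ)) (ξhat : (Fin n → ℝ) → (Fin p → ℝ))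
    (hmin : ∀ y, A.mulVec (ξhat y) + B.mulVec (θhat y) ≤ c ∧
      ∀ ξ θ, A.mulVec ξ + B.mulVec θ ≤ c →
        (1 / 2) * (∑ j, (θhat y j - y j) ^ 2) + d ⬝ᵥ ξhat y
          ≤ (1 / 2) * (∑ j, (θ j - y j) ^ 2) + d ⬝ᵥ ξ) :
    (∀ y, ∀ ξ' : Fin p → ℝ, ∀ θ' : Fin n → ℝ,
      (A.mulVec ξ' + B.mulVec θ' ≤ c ∧
        ∀ ξ θ, A.mulVec ξ + B.mulVec θ ≤ c →
          (1 / 2) * (∑ j, (θ' j - y j) ^ 2) + d ⬝ᵥ ξ'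
            ≤ (1 / 2) * (∑ j, (θ j - y j) ^ 2) + d ⬝ᵥ ξ) → θ' = θhat y) ∧
    (∀ᵐ y ∂(volume : Measure (Fin n → ℝ)), DifferentiableAt ℝ θhat y ∧
      ∀ I : Finset (Fin m),
        (↑I : Set (Fin m)) ⊆ {i | A i ⬝ᵥ ξhat y + B i ⬝ᵥ θhat y = c i} →
        LinearIndependent ℝ (fun i : I => Fin.append (A i.1) (B i.1)) →
        (∀ j ∈ {i : Fin m | A i ⬝ᵥ ξhat y + B i ⬝ᵥ θhat y = c i},
          Fin.append (A j) (B j) ∈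
            Submodule.span ℝ (Set.range (fun i : I => Fin.append (A i.1) (B i.1)))) →
        divg θhat y = (n : ℝ) - (I.card : ℝ)
          + (Matrix.rank (A.submatrix (fun i : I => (i : Fin m)) id) : ℝ)) := by
  have hmin : ∀ y, IsPartialProjMin A B c d y (ξhat y) (θhat y) := hmin
  refine ⟨fun y ξ' θ' h => (hmin y).theta_eq h, ?_⟩
  filter_upwards [(lipschitzWith_of_isPartialProjMin hmin).ae_differentiableAt,
    ae_tangentConeAt_fiber_eq_univ volume fun y => {i | A i ⬝ᵥ ξhat y + B i ⬝ᵥ θhat y = c i}]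
    with y hdiff hcone
  refine ⟨hdiff, fun I hIJ hli hspan => ?_⟩
  set T := (LinearMap.ker (constraintMap (A.submatrix (fun i : I => (i : Fin m)) id)
    (B.submatrix (fun i : I => (i : Fin m)) id))).map (LinearMap.snd ℝ _ _)
  have hmaps : ∀ v, fderiv ℝ θhat y v ∈ T := fun v =>
    hdiff.hasFDerivAt.hasFDerivWithinAt.apply_mem_of_mem_tangentConeAt
      T.closed_of_finiteDimensional
      (fun y' hy' => ⟨_, sub_mem_ker_constraintMap_submatrix _ (fun i => hIJ i.2)
        (fun i => hy'.symm ▸ hIJ i.2), rfl⟩)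
      (hcone ▸ mem_univ v)
  have hfix : ∀ v ∈ T, fderiv ℝ θhat y v = v := by
    rintro _ ⟨⟨u, v⟩, huv, rfl⟩
    refine fderiv_apply_eq_of_eventually_add_smul hdiff ?_
    filter_upwards [(hmin y).eventually_add_smul fun j hj =>
      apply_eq_zero_of_mem_ker_constraintMap_submatrix _ huv (hspan j hj)] with t ht
    exact ((hmin (y + t • v)).theta_eq ht).symm
  have hdim : (finrank ℝ T : ℝ) + Fintype.card I
      = n + (A.submatrix (fun i : I => (i : Fin m)) id).rank := by
    exact_mod_cast finrank_map_snd_ker_constraintMap_add_card _ _ hli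
  rw [divg_eq_trace, LinearMap.IsProj.trace ⟨hmaps, hfix⟩, ← Fintype.card_coe I]
  linarith

/-- Linearly perturbed partial projection onto a polyhedron
`Q = {(ξ,θ) : Aξ + Bθ ≤ c}` with `−d = Aᵀλ₀`, `λ₀ ≥ 0`: (i) the θ-component of any
minimizer of `(1/2)‖θ − y‖₂² + dᵀξ` over `Q` is unique; (ii) for almost every `y`, `θ̂`
is differentiable at `y` and, for any `I_y ⊆ J_y` indexing a maximal linearly
independent subset of the binding rows `[a_iᵀ, b_iᵀ]`, the divergence equals
`n − |I_y| + rank(A_{I_y})`. -/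
theorem divergence_linearly_perturbed_partial_projection {m p n : ℕ}
    (A : Matrix (Fin m) (Fin p) ℝ) (B : Matrix (Fin m) (Fin n) ℝ)
    (c : Fin m → ℝ) (d : Fin p → ℝ)
    (hQ : ∃ ξ : Fin p → ℝ, ∃ θ : Fin n → ℝ, A.mulVec ξ + B.mulVec θ ≤ c)
    (hd : ∃ lam₀ : Fin m → ℝ, 0 ≤ lam₀ ∧ Aᵀ.mulVec lam₀ = -d)
    (θhat : (Fin n → ℝ) → (Fin n → ℝ)) (ξhat : (Fin n → ℝ) → (Fin p → ℝ))
    (hmin : ∀ y, A.mulVec (ξhat y) + B.mulVec (θhat y) ≤ c ∧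
      ∀ ξ θ, A.mulVec ξ + B.mulVec θ ≤ c →
        (1 / 2) * (∑ j, (θhat y j - y j) ^ 2) + d ⬝ᵥ ξhat y
          ≤ (1 / 2) * (∑ j, (θ j - y j) ^ 2) + d ⬝ᵥ ξ) :
    (∀ y, ∀ ξ' : Fin p → ℝ, ∀ θ' : Fin n → ℝ,
      (A.mulVec ξ' + B.mulVec θ' ≤ c ∧
        ∀ ξ θ, A.mulVec ξ + B.mulVec θ ≤ c →
          (1 / 2) * (∑ j, (θ' j - y j) ^ 2) + d ⬝ᵥ ξ'
            ≤ (1 / 2) * (∑ j, (θ j - y j) ^ 2) + d ⬝ᵥ ξ) → θ' = θhat y) ∧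
    (∀ᵐ y ∂(volume : Measure (Fin n → ℝ)), DifferentiableAt ℝ θhat y ∧
      ∀ I : Finset (Fin m),
        (↑I : Set (Fin m)) ⊆ {i | A i ⬝ᵥ ξhat y + B i ⬝ᵥ θhat y = c i} →
        LinearIndependent ℝ (fun i : I => Fin.append (A i.1) (B i.1)) →
        (∀ j ∈ {i : Fin m | A i ⬝ᵥ ξhat y + B i ⬝ᵥ θhat y = c i},
          Fin.append (A j) (B j) ∈
            Submodule.span ℝ (Set.range (fun i : I => Fin.append (A i.1) (B i.1)))) →
        divg θhat y = (n : ℝ) - (I.card : ℝ)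
          + (Matrix.rank (A.submatrix (fun i : I => (i : Fin m)) id) : ℝ)) :=
  divergence_linearly_perturbed_partial_projection_general A B c d θhat ξhat hmin
end
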